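/- For every w ∈ ℂ and real r > 0, the matrix M = [[iw/r, i(r − w·conj(w)/r)],[i/r, −i·conj(w)/r]] has determinant 1 and real trace 2·Im(w)/r in absolute value (namely tr M = −2·Im(w)/r); moreover, for every z ∈ ℂ with z ≠ conj(w), one has (M·z − w)·(z − conj(w)) = r². Consequently M maps the exterior {|z − conj(w)| > r} of its isometric circle into the interior {|ζ − w| < r} of the reflected circle. -/

import Mathlib

/-!
Up to the scalar `i / r`, `M` is the matrix `[[w, r² - w w̄], [1, -w̄]]`, whose Möbius map is
`z ↦ w + r² / (z - w̄)`. Hence `(M·z - w)(z - w̄) = r²`, and taking norms, `|z - w̄| > r` forces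
`|M·z - w| < r`.
-/

open Matrix Complex ComplexConjugate

theorem div_sub_mul_sub_eq {K : Type*} [Field K] {a c z : K} (s : K) (hz : z ≠ c) :
    ((a * z + (s - a * c)) / (z - c) - a) * (z - c) = s := by
  have hzc : z - c ≠ 0 := sub_ne_zero.mpr hz
  field_simp
  ring

theorem lt_of_mul_eq_sq_of_lt {x y r : ℝ} (hr : 0 < r) (hxy : x * y = r ^ 2) (hy : r < y) :
    x < r := by
  nlinarith

theorem norm_sub_lt_of_mul_eq_sq {ζ a z c : ℂ} {r : ℝ} (hr : 0 < r)
    (h : (ζ - a) * (z - c) = (r : ℂ) ^ 2) (hz : r < ‖z - c‖) : ‖ζ - a‖ < r := by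
  refine lt_of_mul_eq_sq_of_lt hr ?_ hz
  rw [← norm_mul, h, norm_pow, norm_real, Real.norm_of_nonneg hr.le]

/-- For every w ∈ ℂ and real r > 0, the matrix
M = [[iw/r, i(r − w·conj(w)/r)],[i/r, −i·conj(w)/r]] has determinant 1 and trace
−2·Im(w)/r; moreover, for every z ∈ ℂ with z ≠ conj(w), one has
(M·z − w)·(z − conj(w)) = r². Consequently M maps the exterior {|z − conj(w)| > r} of
its isometric circle into the interior {|ζ − w| < r} of the reflected circle. -/
theorem stmt16 (w : ℂ) (r : ℝ) (hr : 0 < r) :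
    let M : Matrix (Fin 2) (Fin 2) ℂ :=
      !![I * w / (r : ℂ), I * ((r : ℂ) - w * starRingEnd ℂ w / (r : ℂ));
         I / (r : ℂ), -I * starRingEnd ℂ w / (r : ℂ)]
    M.det = 1 ∧
    M.trace = (↑(-(2 * w.im) / r) : ℂ) ∧
    (∀ z : ℂ, z ≠ starRingEnd ℂ w →
      ((M 0 0 * z + M 0 1) / (M 1 0 * z + M 1 1) - w) * (z - starRingEnd ℂ w) = (r : ℂ) ^ 2) ∧
    (∀ z : ℂ, ‖z - starRingEnd ℂ w‖ > r →
      ‖(M 0 0 * z + M 0 1) / (M 1 0 * z + M 1 1) - w‖ < r) := by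
  intro M
  have hr0 : (r : ℂ) ≠ 0 := ofReal_ne_zero.mpr hr.ne'
  have hmobius (z : ℂ) : (M 0 0 * z + M 0 1) / (M 1 0 * z + M 1 1)
      = (w * z + ((r : ℂ) ^ 2 - w * conj w)) / (z - conj w) := by
    have hnum : M 0 0 * z + M 0 1 = I / r * (w * z + ((r : ℂ) ^ 2 - w * conj w)) := by
      simp only [M, of_apply, cons_val', cons_val_zero, cons_val_one, empty_val', cons_val_fin_one]
      field_simp
    have hden : M 1 0 * z + M 1 1 = I / r * (z - conj w) := by
      simp only [M, of_apply, cons_val', cons_val_zero, cons_val_one, empty_val', cons_val_fin_one]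
      ring
    rw [hnum, hden, mul_div_mul_left _ _ (div_ne_zero I_ne_zero hr0)]
  have hcircle (z : ℂ) (hz : z ≠ conj w) :
      ((M 0 0 * z + M 0 1) / (M 1 0 * z + M 1 1) - w) * (z - conj w) = (r : ℂ) ^ 2 := by
    rw [hmobius]
    exact div_sub_mul_sub_eq _ hz
  refine ⟨?det, ?trace, hcircle, fun z hz => ?_⟩
  case det =>
    simp only [M, det_fin_two_of]
    field_simp
    linear_combination -(r : ℂ) ^ 2 * I_sq
  case trace =>
    simp only [M, trace_fin_two_of]
    have hsub := sub_conj w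
    push_cast at hsub ⊢
    field_simp
    linear_combination (2 * (w.im : ℂ)) * I_sq + I * hsub
  have hne : z ≠ conj w := sub_ne_zero.mp (norm_pos_iff.mp (hr.trans hz))
  exact norm_sub_lt_of_mul_eq_sq hr (hcircle z hne) hz
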